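/- For every integer m ≥ 1, the number of level-(m+1) squares whose interior meets G^(2) ∩ [0,1/5]^2 equals 16^m; that is, #Q_{m+1}^(2)(G^(2) ∩ [0,1/5]^2) = 16^m. -/

import Mathlib

open Set MeasureTheory Filter
open scoped Classical

noncomputable section

/-- Points of `ℝ^d` with the Euclidean metric. -/
abbrev Pt (d : ℕ) := EuclideanSpace ℝ (Fin d)

/-- The closed cube `∏ [(lᵢ-1)/5ⁿ, lᵢ/5ⁿ]`. -/
def cube (d n : ℕ) (l : Fin d → ℕ) : Set (Pt d) :=
  {x | ∀ i, ((l i : ℝ) - 1) / 5 ^ n ≤ x i ∧ x i ≤ (l i : ℝ) / 5 ^ n}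

/-- The collection `𝒬ₙ⁽ᵈ⁾` of level-`n` cubes. -/
def Qcol (d n : ℕ) : Set (Set (Pt d)) :=
  {Q | ∃ l : Fin d → ℕ, (∀ i, 1 ≤ l i ∧ l i ≤ 5 ^ n) ∧ Q = cube d n l}

/-- `𝒬ₙ⁽ᵈ⁾(A)`: the level-`n` cubes whose interior meets `A`. -/
def QcolOf (d n : ℕ) (A : Set (Pt d)) : Set (Set (Pt d)) :=
  {Q | Q ∈ Qcol d n ∧ (interior Q ∩ A).Nonempty}

/-- `F₀⁽ᵈ⁾ = [0,1]^d`. -/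
def F0 (d : ℕ) : Set (Pt d) := {x | ∀ i, x i ∈ Icc (0 : ℝ) 1}

/-- `F₁⁽ᵈ⁾`. -/
def F1 (d : ℕ) : Set (Pt d) :=
  F0 d \ ⋃ i : Fin d, {x | (∀ j, j < i → x j ∈ Ioo (2/5 : ℝ) (3/5)) ∧
    x i ∈ Ioo (1/5 : ℝ) (2/5) ∪ Ioo (3/5 : ℝ) (4/5) ∧
    ∀ j, i < j → x j ∈ Ioo (2/5 : ℝ) (3/5)}

/-- The orientation-preserving affine map from `[0,1]^d` onto the cube indexed by `l` at
level `n`. -/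
def psi (d n : ℕ) (l : Fin d → ℕ) (x : Pt d) : Pt d :=
  WithLp.toLp 2 (fun i => ((l i : ℝ) - 1) / 5 ^ n + x i / 5 ^ n)

/-- The approximations `Fₙ⁽ᵈ⁾`. -/
def Fn (d : ℕ) : ℕ → Set (Pt d)
  | 0 => F0 d
  | 1 => F1 d
  | n + 2 => ⋃ l ∈ {l : Fin d → ℕ | cube d 1 l ∈ QcolOf d 1 (F1 d)}, psi d 1 l '' Fn d (n + 1)

/-- The fractal `F⁽ᵈ⁾`. -/
def Fset (d : ℕ) : Set (Pt d) := ⋂ n, Fn d n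

/-- `G₁⁽ᵈ⁾`: union of the level-1 cubes of `F₁⁽ᵈ⁾` which meet the boundary of `[0,1]^d`. -/
def G1 (d : ℕ) : Set (Pt d) :=
  ⋃ Q ∈ {Q | Q ∈ QcolOf d 1 (F1 d) ∧ (Q ∩ frontier (F0 d)).Nonempty}, Q

/-- The approximations `Gₙ⁽ᵈ⁾`. -/
def Gn (d : ℕ) : ℕ → Set (Pt d)
  | 0 => F0 d
  | 1 => G1 d
  | n + 2 => ⋃ l ∈ {l : Fin d → ℕ | cube d 1 l ∈ QcolOf d 1 (G1 d)}, psi d 1 l '' Gn d (n + 1)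

/-- The boundary fractal `G⁽ᵈ⁾ = [0,1]^d ∩ ⋂_{n ≥ 1} Gₙ⁽ᵈ⁾`. -/
def Gset (d : ℕ) : Set (Pt d) := F0 d ∩ ⋂ n, ⋂ (_ : 1 ≤ n), Gn d n

/-- The discrete `p`-energy `𝓔ₚⁿ(f)` on the level-`n` cubes of `F⁽ᵈ⁾`. -/
def energy (d n : ℕ) (p : ℝ) (f : Set (Pt d) → ℝ) : ℝ :=
  (1 / 2) * ∑' Q : QcolOf d n (Fset d), ∑' Q' : QcolOf d n (Fset d),
    if ((Q : Set (Pt d)) ∩ (Q' : Set (Pt d))).Nonempty then |f Q - f Q'| ^ p else 0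

/-- `Sᵐ(A)`: level-`(n+m)` cubes of `F⁽ᵈ⁾` contained in some cube of `A`. -/
def Sm (d n m : ℕ) (A : Set (Set (Pt d))) : Set (Set (Pt d)) :=
  {Q | Q ∈ QcolOf d (n + m) (Fset d) ∧ ∃ Q' ∈ A, Q ⊆ Q'}

/-- The effective `p`-conductance `𝓔_{p,m}(A₁, A₂)`. -/
def conduct (d n m : ℕ) (p : ℝ) (A₁ A₂ : Set (Set (Pt d))) : ℝ :=
  sInf {e : ℝ | ∃ f : Set (Pt d) → ℝ,
    (∀ Q ∈ Sm d n m A₁, f Q = 1) ∧ (∀ Q ∈ Sm d n m A₂, f Q = 0) ∧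
    e = energy d (n + m) p f}

/-- `Γ(Q)`: level-`n` cubes of `F⁽ᵈ⁾` meeting `Q`. -/
def Gam (d n : ℕ) (Q : Set (Pt d)) : Set (Set (Pt d)) :=
  {Q' | Q' ∈ QcolOf d n (Fset d) ∧ (Q' ∩ Q).Nonempty}

/-- `Γ(Q)ᶜ = 𝒬ₙ⁽ᵈ⁾(F⁽ᵈ⁾) \ Γ(Q)`. -/
def GamC (d n : ℕ) (Q : Set (Pt d)) : Set (Set (Pt d)) :=
  QcolOf d n (Fset d) \ Gam d n Q

/-- The corner cube `[0, 1/5]^d`. -/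
def Qone (d : ℕ) : Set (Pt d) := {x | ∀ i, x i ∈ Icc (0 : ℝ) (1/5)}

/-- The center cube `[2/5, 3/5]^d`. -/
def Qtwo (d : ℕ) : Set (Pt d) := {x | ∀ i, x i ∈ Icc (2/5 : ℝ) (3/5)}

end

/-!
`G₁` is the union of the `5^d - 3^d` level-1 cubes touching `∂[0,1]^d`, so by self-similarity
`Gₙ` is the union of `(5^d - 3^d)^n` level-`n` cubes (indexed by `GnIdx d n`): a copy of `Gₙ₋₁`
sits in each boundary cube of level 1. Each such cube `Q` meets `G` in its interior, at
`Ψ_Q (1/5, …, 1/5)`, since `(1/5, …, 1/5) = Ψ_{[0,1/5]^d} (1, …, 1)` and `(1, …, 1)` is the fixed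
point of `Ψ_{[4/5,1]^d}`. Hence `𝒬ₙ₊₁(G)` consists of exactly these cubes, and those inside
`[0,1/5]^d` form the copy of `Gₙ` placed in the corner cube: there are `(5^d - 3^d)^n` of them.
-/

section Cubes

variable {d n : ℕ} {l l' : Fin d → ℕ} {x : Pt d}

lemma mem_cube : x ∈ cube d n l ↔ ∀ i, (l i : ℝ) - 1 ≤ 5 ^ n * x i ∧ 5 ^ n * x i ≤ l i := by
  have h5 : (0 : ℝ) < 5 ^ n := by positivity
  simp only [cube, mem_ofPred_eq, div_le_iff₀' h5, le_div_iff₀' h5]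

lemma cube_eq_preimage_pi (d n : ℕ) (l : Fin d → ℕ) :
    cube d n l = PiLp.homeomorph 2 (fun _ : Fin d => ℝ) ⁻¹'
      univ.pi fun i => Icc (((l i : ℝ) - 1) / 5 ^ n) ((l i : ℝ) / 5 ^ n) := by
  ext x
  exact ⟨fun h i _ => h i, fun h i => h i (mem_univ i)⟩

lemma isClosed_cube (d n : ℕ) (l : Fin d → ℕ) : IsClosed (cube d n l) := by
  rw [cube_eq_preimage_pi]
  exact (isClosed_set_pi fun _ _ => isClosed_Icc).preimage (PiLp.homeomorph 2 _).continuous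

lemma mem_interior_cube :
    x ∈ interior (cube d n l) ↔ ∀ i, (l i : ℝ) - 1 < 5 ^ n * x i ∧ 5 ^ n * x i < l i := by
  have h5 : (0 : ℝ) < 5 ^ n := by positivity
  rw [cube_eq_preimage_pi, ← Homeomorph.preimage_interior, interior_pi_set finite_univ]
  simp only [mem_preimage, Set.mem_pi, mem_univ, true_implies, interior_Icc, mem_Ioo,
    div_lt_iff₀' h5, lt_div_iff₀' h5]
  exact Iff.rfl

lemma eq_of_mem_interior_cube_of_mem_cube (hx : x ∈ interior (cube d n l))
    (hx' : x ∈ cube d n l') : l = l' := by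
  funext i
  have h := mem_interior_cube.1 hx i
  have h' := mem_cube.1 hx' i
  have h₁ : (l i : ℝ) < l' i + 1 := by linarith
  have h₂ : (l' i : ℝ) < l i + 1 := by linarith
  have : l i < l' i + 1 := by exact_mod_cast h₁
  have : l' i < l i + 1 := by exact_mod_cast h₂
  omega

noncomputable def cubeCenter (d n : ℕ) (l : Fin d → ℕ) : Pt d :=
  WithLp.toLp 2 fun i => ((l i : ℝ) - 1 / 2) / 5 ^ n

lemma cubeCenter_mem_interior (d n : ℕ) (l : Fin d → ℕ) :
    cubeCenter d n l ∈ interior (cube d n l) := by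
  have h5 : (0 : ℝ) < 5 ^ n := by positivity
  refine mem_interior_cube.2 fun i => ?_
  simp only [cubeCenter, PiLp.toLp_apply, mul_div_cancel₀ _ h5.ne']
  constructor <;> linarith

lemma cube_injective (d n : ℕ) : Function.Injective (cube d n) := fun l _ h =>
  eq_of_mem_interior_cube_of_mem_cube (cubeCenter_mem_interior d n l)
    (h ▸ interior_subset (cubeCenter_mem_interior d n l))

lemma F0_eq_cube (d : ℕ) : F0 d = cube d 0 fun _ => 1 := by
  ext x
  simp [F0, cube]

lemma cube_subset_F0 (hl : ∀ i, 1 ≤ l i ∧ l i ≤ 5 ^ n) : cube d n l ⊆ F0 d := by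
  intro x hx i
  have h5 : (0 : ℝ) < 5 ^ n := by positivity
  have hxi := mem_cube.1 hx i
  have h₁ : (1 : ℝ) ≤ l i := by exact_mod_cast (hl i).1
  have h₂ : (l i : ℝ) ≤ 5 ^ n := by exact_mod_cast (hl i).2
  constructor <;> nlinarith

lemma mem_frontier_F0 : x ∈ frontier (F0 d) ↔ x ∈ F0 d ∧ ∃ i, x i = 0 ∨ x i = 1 := by
  have hF : IsClosed (F0 d) := by rw [F0_eq_cube]; exact isClosed_cube d 0 _
  rw [hF.frontier_eq, Set.mem_sdiff, and_congr_right_iff]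
  intro hx
  rw [F0_eq_cube, mem_interior_cube]
  simp only [pow_zero, one_mul, Nat.cast_one, sub_self, not_forall]
  refine exists_congr fun i => ?_
  obtain ⟨h₀, h₁⟩ := hx i
  constructor
  · intro h
    by_contra! h'
    exact h ⟨lt_of_le_of_ne h₀ (Ne.symm h'.1), lt_of_le_of_ne h₁ h'.2⟩
  · rintro (h | h) <;> simp [h]

end Cubes

section BoundaryCubes

variable {d : ℕ} {a l : Fin d → ℕ}

lemma mem_F1_of_exists {x : Pt d} (hx : x ∈ F0 d) (h : ∃ j, x j ≤ 1 / 5 ∨ 4 / 5 ≤ x j) :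
    x ∈ F1 d := by
  refine ⟨hx, fun hmem => ?_⟩
  obtain ⟨i, hi⟩ := mem_iUnion.1 hmem
  obtain ⟨j, hj⟩ := h
  have hIoo : x j ∈ Ioo (1 / 5 : ℝ) (4 / 5) := by
    rcases lt_trichotomy j i with hji | rfl | hij
    · exact Ioo_subset_Ioo (by norm_num) (by norm_num) (hi.1 j hji)
    · rcases hi.2.1 with h' | h'
      · exact Ioo_subset_Ioo le_rfl (by norm_num) h'
      · exact Ioo_subset_Ioo (by norm_num) le_rfl h'
    · exact Ioo_subset_Ioo (by norm_num) (by norm_num) (hi.2.2 j hij)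
  rcases hj with hj | hj <;> linarith [hIoo.1, hIoo.2]

def G1Idx (d : ℕ) : Finset (Fin d → ℕ) :=
  (Fintype.piFinset fun _ => Finset.Icc 1 5).filter fun a => ∃ i, a i = 1 ∨ a i = 5

lemma mem_G1Idx : a ∈ G1Idx d ↔ (∀ i, 1 ≤ a i ∧ a i ≤ 5) ∧ ∃ i, a i = 1 ∨ a i = 5 := by
  simp [G1Idx]

lemma const_mem_G1Idx [NeZero d] {c : ℕ} (hc : c = 1 ∨ c = 5) : (fun _ => c) ∈ G1Idx d :=
  mem_G1Idx.2 ⟨fun _ => by omega, 0, hc⟩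

lemma card_G1Idx (d : ℕ) : (G1Idx d).card = 5 ^ d - 3 ^ d := by
  have hcompl : (Fintype.piFinset fun _ : Fin d => Finset.Icc 1 5).filter
      (fun a => ¬∃ i, a i = 1 ∨ a i = 5) = Fintype.piFinset fun _ => Finset.Icc 2 4 := by
    ext a
    simp only [Finset.mem_filter, Fintype.mem_piFinset, Finset.mem_Icc, not_exists, not_or,
      ← forall_and]
    exact forall_congr' fun i => by omega
  have h := Finset.card_filter_add_card_filter_not
    (s := Fintype.piFinset fun _ : Fin d => Finset.Icc 1 5) (fun a => ∃ i, a i = 1 ∨ a i = 5)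
  rw [hcompl] at h
  norm_num [Fintype.card_piFinset] at h
  rw [G1Idx]
  omega

lemma cube_mem_QcolOf_F1 (ha : a ∈ G1Idx d) : cube d 1 a ∈ QcolOf d 1 (F1 d) := by
  obtain ⟨hab, i, hi⟩ := mem_G1Idx.1 ha
  have hcast : ∀ j, (1 : ℝ) ≤ a j ∧ (a j : ℝ) ≤ 5 := fun j =>
    ⟨by exact_mod_cast (hab j).1, by exact_mod_cast (hab j).2⟩
  refine ⟨⟨a, by simpa using hab, rfl⟩, cubeCenter d 1 a, cubeCenter_mem_interior d 1 a, ?_⟩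
  refine mem_F1_of_exists (fun j => ?_) ⟨i, ?_⟩
  · have := hcast j
    simp only [cubeCenter, PiLp.toLp_apply, mem_Icc]
    constructor <;> linarith
  · rcases hi with hi | hi <;> simp only [cubeCenter, PiLp.toLp_apply, hi] <;> norm_num

-- The witness is the fixed point of `psi d 1 a`.
lemma cube_inter_frontier_F0_nonempty (ha : a ∈ G1Idx d) :
    (cube d 1 a ∩ frontier (F0 d)).Nonempty := by
  obtain ⟨hab, i, hi⟩ := mem_G1Idx.1 ha
  have hsub : cube d 1 a ⊆ F0 d := cube_subset_F0 (by simpa using hab)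
  have hmem : (WithLp.toLp 2 fun j => ((a j : ℝ) - 1) / 4 : Pt d) ∈ cube d 1 a := by
    refine mem_cube.2 fun j => ?_
    have : (1 : ℝ) ≤ a j := by exact_mod_cast (hab j).1
    have : (a j : ℝ) ≤ 5 := by exact_mod_cast (hab j).2
    rw [pow_one]
    constructor <;> linarith
  refine ⟨_, hmem, mem_frontier_F0.2 ⟨hsub hmem, i, ?_⟩⟩
  rcases hi with hi | hi <;> norm_num [hi]

lemma mem_G1Idx_of_cube_inter_frontier (hl : ∀ i, 1 ≤ l i ∧ l i ≤ 5)
    (h : (cube d 1 l ∩ frontier (F0 d)).Nonempty) : l ∈ G1Idx d := by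
  obtain ⟨y, hy, hyF⟩ := h
  obtain ⟨-, i, hi⟩ := mem_frontier_F0.1 hyF
  refine mem_G1Idx.2 ⟨hl, i, ?_⟩
  have hyi := mem_cube.1 hy i
  have := hl i
  rcases hi with hi | hi <;> rw [hi] at hyi
  · have : (l i : ℝ) ≤ 1 := by linarith
    have : l i ≤ 1 := by exact_mod_cast this
    omega
  · have : (5 : ℝ) ≤ l i := by linarith
    have : 5 ≤ l i := by exact_mod_cast this
    omega

lemma G1_eq_iUnion_cube : G1 d = ⋃ a ∈ G1Idx d, cube d 1 a := by
  ext x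
  simp only [G1, mem_iUnion, exists_prop, mem_ofPred_eq]
  constructor
  · rintro ⟨_, ⟨⟨⟨l, hl, rfl⟩, -⟩, hfr⟩, hx⟩
    exact ⟨l, mem_G1Idx_of_cube_inter_frontier (by simpa using hl) hfr, hx⟩
  · rintro ⟨a, ha, hx⟩
    exact ⟨_, ⟨cube_mem_QcolOf_F1 ha, cube_inter_frontier_F0_nonempty ha⟩, hx⟩

lemma setOf_cube_mem_QcolOf_G1 : {l | cube d 1 l ∈ QcolOf d 1 (G1 d)} = G1Idx d := by
  ext l
  constructor
  · rintro ⟨⟨l', -, hl'⟩, x, hxl, hxG⟩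
    obtain rfl := cube_injective d 1 hl'
    rw [G1_eq_iUnion_cube, mem_iUnion₂] at hxG
    obtain ⟨a, ha, hxa⟩ := hxG
    rwa [eq_of_mem_interior_cube_of_mem_cube hxl hxa]
  · intro ha
    refine ⟨(cube_mem_QcolOf_F1 ha).1, cubeCenter d 1 l, cubeCenter_mem_interior d 1 l, ?_⟩
    rw [G1_eq_iUnion_cube]
    exact mem_biUnion ha (interior_subset (cubeCenter_mem_interior d 1 l))

end BoundaryCubes

section SelfSimilarity

variable {d n : ℕ} {a b l : Fin d → ℕ}

lemma five_pow_mul_psi_apply (x : Pt d) (i : Fin d) :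
    5 ^ n * psi d n l x i = (l i : ℝ) - 1 + x i := by
  have h5 : (5 : ℝ) ^ n ≠ 0 := by positivity
  simp only [psi, PiLp.toLp_apply]
  field_simp

lemma image_psi_F0 (d n : ℕ) (l : Fin d → ℕ) : psi d n l '' F0 d = cube d n l := by
  have h5 : (5 : ℝ) ^ n ≠ 0 := by positivity
  ext x
  constructor
  · rintro ⟨y, hy, rfl⟩
    refine mem_cube.2 fun i => ?_
    rw [five_pow_mul_psi_apply]
    constructor <;> linarith [(hy i).1, (hy i).2]
  · intro hx
    refine ⟨WithLp.toLp 2 fun i => 5 ^ n * x i - ((l i : ℝ) - 1), fun i => ?_, ?_⟩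
    · have := mem_cube.1 hx i
      simp only [mem_Icc]
      constructor <;> linarith
    · ext i
      simp only [psi, PiLp.toLp_apply]
      field_simp
      ring

lemma psi_zero_one (x : Pt d) : psi d 0 (fun _ => 1) x = x := by
  ext i
  simp [psi]

/-- Index of the level-`(n+1)` cube in position `b` (at level `n`) inside the level-`1` cube `a`. -/
def nestIdx (n : ℕ) (a b : Fin d → ℕ) : Fin d → ℕ := fun i => (a i - 1) * 5 ^ n + b i

lemma nestIdx_one_left (n : ℕ) (b : Fin d → ℕ) : nestIdx n (fun _ => 1) b = b := by
  ext i
  simp [nestIdx]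

lemma psi_psi (ha : ∀ i, 1 ≤ a i) (x : Pt d) :
    psi d 1 a (psi d n b x) = psi d (n + 1) (nestIdx n a b) x := by
  have h5 : (5 : ℝ) ^ n ≠ 0 := by positivity
  ext i
  simp only [psi, PiLp.toLp_apply, nestIdx]
  push_cast [Nat.cast_sub (ha i)]
  field_simp
  ring

lemma image_psi_cube (ha : ∀ i, 1 ≤ a i) (n : ℕ) (b : Fin d → ℕ) :
    psi d 1 a '' cube d n b = cube d (n + 1) (nestIdx n a b) := by
  rw [← image_psi_F0 d n b, image_image, ← image_psi_F0]
  exact image_congr fun x _ => psi_psi ha x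

end SelfSimilarity

section Indices

variable {d n : ℕ} {l : Fin d → ℕ}

def GnIdx (d : ℕ) : ℕ → Finset (Fin d → ℕ)
  | 0 => {fun _ => 1}
  | n + 1 => (G1Idx d ×ˢ GnIdx d n).image fun p => nestIdx n p.1 p.2

lemma mem_GnIdx_succ : l ∈ GnIdx d (n + 1) ↔ ∃ a ∈ G1Idx d, ∃ b ∈ GnIdx d n, nestIdx n a b = l := by
  simp [GnIdx, and_assoc]

lemma bounds_of_mem_GnIdx : ∀ {n} {l : Fin d → ℕ}, l ∈ GnIdx d n → ∀ i, 1 ≤ l i ∧ l i ≤ 5 ^ n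
  | 0, l, hl => by simp_all [GnIdx]
  | n + 1, l, hl => by
    obtain ⟨a, ha, b, hb, rfl⟩ := mem_GnIdx_succ.1 hl
    intro i
    have ha' := (mem_G1Idx.1 ha).1 i
    have hb' := bounds_of_mem_GnIdx hb i
    have : (a i - 1) * 5 ^ n ≤ 4 * 5 ^ n := Nat.mul_le_mul_right _ (by omega)
    simp only [nestIdx, pow_succ]
    omega

lemma sub_one_mul_add_inj {E a b a' b' : ℕ} (hb : 1 ≤ b ∧ b ≤ E) (hb' : 1 ≤ b' ∧ b' ≤ E)
    (h : (a - 1) * E + b = (a' - 1) * E + b') : a - 1 = a' - 1 ∧ b = b' := by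
  have hE : 0 < E := by omega
  have key : ∀ {u v : ℕ}, 1 ≤ v ∧ v ≤ E →
      (u * E + v - 1) / E = u ∧ (u * E + v - 1) % E = v - 1 :=
    fun hv => (Nat.div_mod_unique hE).2 ⟨by rw [mul_comm]; omega, by omega⟩
  obtain ⟨h₁, h₂⟩ := key (u := a - 1) hb
  obtain ⟨h₁', h₂'⟩ := key (u := a' - 1) hb'
  rw [h] at h₁ h₂
  omega

lemma nestIdx_injOn (d n : ℕ) :
    InjOn (fun p : (Fin d → ℕ) × (Fin d → ℕ) => nestIdx n p.1 p.2) (↑(G1Idx d ×ˢ GnIdx d n)) := by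
  rintro ⟨a, b⟩ hab ⟨a', b'⟩ hab' h
  simp only [Finset.coe_product, mem_prod, Finset.mem_coe] at hab hab'
  have hi : ∀ i, a i - 1 = a' i - 1 ∧ b i = b' i := fun i =>
    sub_one_mul_add_inj (bounds_of_mem_GnIdx hab.2 i) (bounds_of_mem_GnIdx hab'.2 i) (congrFun h i)
  have ha : ∀ i, a i = a' i := fun i => by
    have := ((mem_G1Idx.1 hab.1).1 i).1
    have := ((mem_G1Idx.1 hab'.1).1 i).1
    have := (hi i).1
    omega
  exact Prod.ext (funext ha) (funext fun i => (hi i).2)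

lemma card_GnIdx (d n : ℕ) : (GnIdx d n).card = (5 ^ d - 3 ^ d) ^ n := by
  induction n with
  | zero => rfl
  | succ n ih =>
    rw [GnIdx, Finset.card_image_of_injOn (nestIdx_injOn d n), Finset.card_product, card_G1Idx,
      ih, pow_succ, mul_comm]

lemma mem_GnIdx_of_mem_GnIdx_succ (hl : l ∈ GnIdx d (n + 1)) (hle : ∀ i, l i ≤ 5 ^ n) :
    l ∈ GnIdx d n := by
  obtain ⟨a, ha, b, hb, rfl⟩ := mem_GnIdx_succ.1 hl
  suffices a = fun _ => 1 by rwa [this, nestIdx_one_left]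
  funext i
  have := ((mem_G1Idx.1 ha).1 i).1
  have := (bounds_of_mem_GnIdx hb i).1
  have := hle i
  have : (a i - 1) * 5 ^ n < 1 * 5 ^ n := by simp only [nestIdx] at this; omega
  have := Nat.lt_of_mul_lt_mul_right this
  omega

lemma mem_GnIdx_succ_of_mem_GnIdx [NeZero d] (hl : l ∈ GnIdx d n) : l ∈ GnIdx d (n + 1) :=
  mem_GnIdx_succ.2 ⟨_, const_mem_G1Idx (Or.inl rfl), l, hl, nestIdx_one_left n l⟩

end Indices

section BoundaryFractal

variable {d : ℕ}

lemma Gn_succ (n : ℕ) : Gn d (n + 1) = ⋃ a ∈ G1Idx d, psi d 1 a '' Gn d n := by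
  cases n with
  | zero =>
    simp only [Gn, G1_eq_iUnion_cube, image_psi_F0]
  | succ n =>
    rw [Gn, setOf_cube_mem_QcolOf_G1]
    rfl

lemma Gn_eq_iUnion_cube (n : ℕ) : Gn d n = ⋃ l ∈ GnIdx d n, cube d n l := by
  induction n with
  | zero => simp [Gn, GnIdx, F0_eq_cube]
  | succ n ih =>
    ext x
    simp only [Gn_succ, ih, image_iUnion₂, mem_iUnion, exists_prop, mem_GnIdx_succ]
    constructor
    · rintro ⟨a, ha, b, hb, hx⟩
      rw [image_psi_cube (fun i => ((mem_G1Idx.1 ha).1 i).1)] at hx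
      exact ⟨_, ⟨a, ha, b, hb, rfl⟩, hx⟩
    · rintro ⟨_, ⟨a, ha, b, hb, rfl⟩, hx⟩
      rw [← image_psi_cube (fun i => ((mem_G1Idx.1 ha).1 i).1)] at hx
      exact ⟨a, ha, b, hb, hx⟩

lemma Gn_antitone : Antitone (Gn d) := by
  refine antitone_nat_of_succ_le fun n => ?_
  induction n with
  | zero =>
    rw [Gn_succ]
    refine iUnion₂_subset fun a ha => ?_
    rw [Gn, image_psi_F0]
    exact cube_subset_F0 (by simpa using (mem_G1Idx.1 ha).1)
  | succ n ih =>
    calc Gn d (n + 2) = ⋃ a ∈ G1Idx d, psi d 1 a '' Gn d (n + 1) := Gn_succ (n + 1)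
      _ ⊆ ⋃ a ∈ G1Idx d, psi d 1 a '' Gn d n := biUnion_mono subset_rfl fun a _ => image_mono ih
      _ = Gn d (n + 1) := (Gn_succ n).symm

lemma image_psi_Gn_subset : ∀ {n} {l : Fin d → ℕ}, l ∈ GnIdx d n →
    ∀ k, psi d n l '' Gn d k ⊆ Gn d (n + k)
  | 0, l, hl, k => by
    rw [GnIdx, Finset.mem_singleton] at hl
    subst hl
    simp [psi_zero_one]
  | n + 1, l, hl, k => by
    obtain ⟨a, ha, b, hb, rfl⟩ := mem_GnIdx_succ.1 hl
    rw [← image_congr fun x _ => psi_psi (fun i => ((mem_G1Idx.1 ha).1 i).1) x,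
      ← image_image, add_right_comm, Gn_succ]
    exact (image_mono (image_psi_Gn_subset hb k)).trans
      (subset_iUnion₂ (s := fun a (_ : a ∈ G1Idx d) => psi d 1 a '' Gn d (n + k)) a ha)

lemma toLp_one_mem_Gn [NeZero d] (k : ℕ) : (WithLp.toLp 2 fun _ => 1 : Pt d) ∈ Gn d k := by
  induction k with
  | zero => exact fun _ => by simp
  | succ k ih =>
    rw [Gn_succ]
    refine mem_iUnion₂.2 ⟨_, const_mem_G1Idx (Or.inr rfl), _, ih, ?_⟩
    ext i
    norm_num [psi]

lemma toLp_fifth_mem_Gn [NeZero d] (k : ℕ) : (WithLp.toLp 2 fun _ => 1 / 5 : Pt d) ∈ Gn d k := by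
  cases k with
  | zero => exact fun _ => by norm_num
  | succ k =>
    rw [Gn_succ]
    refine mem_iUnion₂.2 ⟨_, const_mem_G1Idx (Or.inl rfl), _, toLp_one_mem_Gn k, ?_⟩
    ext i
    norm_num [psi]

lemma mem_Gset_of_forall_mem_Gn {x : Pt d} (h : ∀ k, x ∈ Gn d k) : x ∈ Gset d :=
  ⟨h 0, mem_iInter₂.2 fun k _ => h k⟩

lemma exists_mem_interior_cube_inter_Gset [NeZero d] {n : ℕ} {l : Fin d → ℕ}
    (hl : l ∈ GnIdx d n) : (interior (cube d n l) ∩ Gset d).Nonempty := by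
  refine ⟨psi d n l (WithLp.toLp 2 fun _ => 1 / 5), mem_interior_cube.2 fun i => ?_,
    mem_Gset_of_forall_mem_Gn fun k => ?_⟩
  · rw [five_pow_mul_psi_apply]
    constructor <;> linarith
  · exact Gn_antitone le_add_self (image_psi_Gn_subset hl k ⟨_, toLp_fifth_mem_Gn k, rfl⟩)

end BoundaryFractal

section Corner

variable {d n : ℕ} {l : Fin d → ℕ}

lemma cube_subset_Qone (hl : ∀ i, 1 ≤ l i ∧ l i ≤ 5 ^ n) : cube d (n + 1) l ⊆ Qone d := by
  intro x hx i
  have h5 : (0 : ℝ) < 5 ^ n := by positivity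
  have hxi := mem_cube.1 hx i
  have h₁ : (1 : ℝ) ≤ l i := by exact_mod_cast (hl i).1
  have h₂ : (l i : ℝ) ≤ 5 ^ n := by exact_mod_cast (hl i).2
  rw [pow_succ] at hxi
  constructor <;> nlinarith

lemma le_of_mem_interior_cube_of_mem_Qone {x : Pt d} (hx : x ∈ interior (cube d (n + 1) l))
    (hQ : x ∈ Qone d) (i : Fin d) : l i ≤ 5 ^ n := by
  have h5 : (0 : ℝ) < 5 ^ n := by positivity
  have hxi := mem_interior_cube.1 hx i
  rw [pow_succ] at hxi
  have : (l i : ℝ) < 5 ^ n + 1 := by nlinarith [(hQ i).2]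
  have : l i < 5 ^ n + 1 := by exact_mod_cast this
  omega

theorem QcolOf_Gset_inter_Qone [NeZero d] (n : ℕ) :
    QcolOf d (n + 1) (Gset d ∩ Qone d) = cube d (n + 1) '' GnIdx d n := by
  ext Q
  constructor
  · rintro ⟨⟨l, -, rfl⟩, x, hxl, hxG, hxQ⟩
    have hx : x ∈ Gn d (n + 1) := mem_iInter₂.1 hxG.2 (n + 1) n.succ_pos
    rw [Gn_eq_iUnion_cube, mem_iUnion₂] at hx
    obtain ⟨l', hl', hxl'⟩ := hx
    obtain rfl := eq_of_mem_interior_cube_of_mem_cube hxl hxl'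
    exact ⟨l, mem_GnIdx_of_mem_GnIdx_succ hl' (le_of_mem_interior_cube_of_mem_Qone hxl hxQ), rfl⟩
  · rintro ⟨l, hl, rfl⟩
    have hbd := bounds_of_mem_GnIdx hl
    obtain ⟨x, hxl, hxG⟩ := exists_mem_interior_cube_inter_Gset (mem_GnIdx_succ_of_mem_GnIdx hl)
    have hle : 5 ^ n ≤ 5 ^ (n + 1) := Nat.pow_le_pow_right (by norm_num) n.le_succ
    exact ⟨⟨l, fun i => ⟨(hbd i).1, (hbd i).2.trans hle⟩, rfl⟩, x, hxl, hxG,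
      cube_subset_Qone hbd (interior_subset hxl)⟩

theorem ncard_QcolOf_Gset_inter_Qone [NeZero d] (n : ℕ) :
    (QcolOf d (n + 1) (Gset d ∩ Qone d)).ncard = (5 ^ d - 3 ^ d) ^ n := by
  rw [QcolOf_Gset_inter_Qone, ncard_image_of_injective _ (cube_injective d (n + 1)),
    ncard_coe_finset, card_GnIdx]

end Corner

theorem statement15_general (m : ℕ) :
    (QcolOf 2 (m + 1) (Gset 2 ∩ Qone 2)).ncard = 16 ^ m :=
  ncard_QcolOf_Gset_inter_Qone m

/-- The number of level-`(m+1)` squares whose interior meets `G⁽²⁾ ∩ [0,1/5]²` is `16^m`. -/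
theorem statement15 (m : ℕ) (hm : 1 ≤ m) :
    (QcolOf 2 (m + 1) (Gset 2 ∩ Qone 2)).ncard = 16 ^ m :=
  statement15_general m
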